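/- Let H be a graph with δ(H) ≥ ⌈(n−1)/2⌉ in which every connected component has at most n−2 vertices, and suppose |H| ≥ 2n−3. Then H has at least three connected components, each of size at least ⌈(n+1)/2⌉, and consequently the complement of H contains the kipas K̂_n = K_1 + P_{n−1} as a subgraph (obtained by taking 1, ⌊(n−1)/2⌋, and ⌈(n−1)/2⌉ vertices from three distinct components). -/

import Mathlib

open SimpleGraph

/-- `H` is contained in `G` as a subgraph. -/
def Contains {α β : Type*} (G : SimpleGraph α) (H : SimpleGraph β) : Prop :=
  ∃ f : H →g G, Function.Injective f

/-- Every red/blue coloring of `K_N` (red = `C`, blue = `Cᶜ`) has a red `G` or blue `H`. -/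
def RamseyProp {α β : Type*} (N : ℕ) (G : SimpleGraph α) (H : SimpleGraph β) : Prop :=
  ∀ C : SimpleGraph (Fin N), Contains C G ∨ Contains Cᶜ H

/-- The Ramsey number `R(G, H)`. -/
noncomputable def ramseyNumber {α β : Type*} (G : SimpleGraph α) (H : SimpleGraph β) : ℕ :=
  sInf {N | RamseyProp N G H}

/-- The join `G + H`: disjoint union plus all edges in between. -/
def graphJoin {α β : Type*} (G : SimpleGraph α) (H : SimpleGraph β) : SimpleGraph (α ⊕ β) :=
  SimpleGraph.fromRel (fun x y =>
    match x, y with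
    | Sum.inl a, Sum.inl b => G.Adj a b
    | Sum.inr a, Sum.inr b => H.Adj a b
    | _, _ => True)

/-- The wheel `W_n = K_1 + C_{n-1}` on `n` vertices. -/
def wheel (n : ℕ) : SimpleGraph (Fin 1 ⊕ Fin (n - 1)) :=
  graphJoin ⊥ (SimpleGraph.cycleGraph (n - 1))

/-- A perfect matching `k • K_2` on `2k` vertices. -/
def matching (k : ℕ) : SimpleGraph (Fin k × Fin 2) :=
  SimpleGraph.fromRel (fun x y => x.1 = y.1)

/-- The fan `F_k = K_1 + k • K_2`. -/
def fan (k : ℕ) : SimpleGraph (Fin 1 ⊕ Fin k × Fin 2) :=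
  graphJoin ⊥ (matching k)

/-- The kipas `K̂_n = K_1 + P_{n-1}` on `n` vertices. -/
def kipas (n : ℕ) : SimpleGraph (Fin 1 ⊕ Fin (n - 1)) :=
  graphJoin ⊥ (SimpleGraph.pathGraph (n - 1))

/-- The blow-up `G[K_2]`: each vertex replaced by an adjacent pair; vertices in
different pairs adjacent iff the original vertices are adjacent. -/
def blowUp {α : Type*} (G : SimpleGraph α) : SimpleGraph (α × Fin 2) :=
  SimpleGraph.fromRel (fun x y => x.1 = y.1 ∨ G.Adj x.1 y.1)

/-! A vertex has at least ⌈(n−1)/2⌉ neighbours, all in its own component, so every component has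
at least ⌈(n+1)/2⌉ vertices. Components have at most n−2 vertices and 2(n−2) < 2n−3, so there
are at least three of them. Vertices in different components are adjacent in Hᶜ, so Hᶜ contains
the complete tripartite graph with three parts of size ⌈(n−1)/2⌉; colouring the hub of the kipas
with one colour and its path alternately with the other two gives colour classes no larger than
that, so the kipas embeds in it. -/

theorem contains_iff_isContained {α β : Type*} {G : SimpleGraph α} {F : SimpleGraph β} :
    Contains G F ↔ F ⊑ G :=
  ⟨fun ⟨f, hf⟩ => ⟨⟨f, hf⟩⟩, fun ⟨f⟩ => ⟨f.toHom, f.injective⟩⟩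

namespace SimpleGraph

variable {V : Type*} {H : SimpleGraph V}

theorem compl_adj_of_connectedComponentMk_ne {u v : V}
    (h : H.connectedComponentMk u ≠ H.connectedComponentMk v) : Hᶜ.Adj u v :=
  ⟨fun huv => h (congrArg _ huv), fun hadj => h (ConnectedComponent.sound hadj.reachable)⟩

theorem card_neighborSet_lt_card_supp [Finite V] (v : V) :
    Nat.card (H.neighborSet v) < Nat.card (H.connectedComponentMk v).supp := by
  simp only [Nat.card_coe_set_eq]
  refine Set.ncard_lt_ncard ?_ (Set.toFinite _)
  refine Set.ssubset_iff_exists.2 ⟨fun u hu => ?_, v, rfl, H.loopless.irrefl v⟩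
  exact ConnectedComponent.sound (H.adj_symm hu).reachable

theorem card_le_mul_card_connectedComponent [Finite V] {m : ℕ}
    (h : ∀ c : H.ConnectedComponent, Nat.card c.supp ≤ m) :
    Nat.card V ≤ m * Nat.card H.ConnectedComponent := by
  have := Fintype.ofFinite H.ConnectedComponent
  calc Nat.card V = ∑ c : H.ConnectedComponent, Nat.card c.supp := by
        rw [← Nat.card_sigma]
        exact Nat.card_congr (Equiv.sigmaFiberEquiv H.connectedComponentMk).symm
    _ ≤ ∑ _c : H.ConnectedComponent, m := Finset.sum_le_sum fun c _ => h c
    _ = m * Nat.card H.ConnectedComponent := by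
        rw [Finset.sum_const, Finset.card_univ, Nat.card_eq_fintype_card, smul_eq_mul, mul_comm]

theorem completeEquipartiteGraph_isContained_compl [Finite V] {r t : ℕ}
    (e : Fin r ↪ H.ConnectedComponent) (ht : ∀ i, t ≤ Nat.card (e i).supp) :
    completeEquipartiteGraph r t ⊑ Hᶜ := by
  classical
  have := Fintype.ofFinite V
  have g (i : Fin r) : Fin t ↪ (e i).supp := Classical.choice <| by
    rw [Function.Embedding.nonempty_iff_card_le, Fintype.card_fin, ← Nat.card_eq_fintype_card]
    exact ht i
  have hg (i : Fin r) (j : Fin t) : H.connectedComponentMk (g i j) = e i := (g i j).2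
  refine ⟨⟨⟨fun x => g x.1 x.2, fun {x y} hxy => ?_⟩, fun x y hxy => ?_⟩⟩
  · exact compl_adj_of_connectedComponentMk_ne (by rw [hg, hg]; exact e.injective.ne hxy)
  · have hi : x.1 = y.1 := e.injective (by rw [← hg x.1 x.2, ← hg y.1 y.2]; exact congrArg _ hxy)
    obtain ⟨i, j⟩ := x
    obtain ⟨i', j'⟩ := y
    subst hi
    exact Prod.ext rfl ((g i).injective (Subtype.ext hxy))

end SimpleGraph

def kipasColoring (n : ℕ) : (kipas n).Coloring (Fin 3) :=
  Coloring.mk (Sum.elim (fun _ => 0) (fun i => if i.val % 2 = 0 then 1 else 2)) <| by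
    rintro (a | i) (b | j) ⟨-, hadj⟩
    · simp at hadj
    · simp only [Sum.elim_inl, Sum.elim_inr]
      split_ifs <;> decide
    · simp only [Sum.elim_inl, Sum.elim_inr]
      split_ifs <;> decide
    · simp only [pathGraph_adj] at hadj
      simp only [Sum.elim_inr]
      split_ifs <;> simp <;> omega

@[simp]
theorem kipasColoring_inl (n : ℕ) (a : Fin 1) : kipasColoring n (Sum.inl a) = 0 := rfl

@[simp]
theorem kipasColoring_inr (n : ℕ) (i : Fin (n - 1)) :
    kipasColoring n (Sum.inr i) = if i.val % 2 = 0 then 1 else 2 := rfl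

theorem card_colorClass_kipasColoring_le {n : ℕ} (hn : 2 ≤ n) (k : Fin 3) :
    Nat.card ((kipasColoring n).colorClass k) ≤ n / 2 := by
  let half : (kipasColoring n).colorClass k → Fin (n / 2) := fun x =>
    ⟨Sum.elim (fun _ => 0) (fun i => i.val / 2) x.1, by rcases x with ⟨_ | i, _⟩ <;> simp <;> omega⟩
  have half_injective : Function.Injective half := by
    rintro ⟨a | i, hx⟩ ⟨b | j, hy⟩ h <;>
      simp only [Coloring.colorClass, Set.mem_ofPred_eq, kipasColoring_inl, kipasColoring_inr,
        half, Fin.mk.injEq, Sum.elim_inl, Sum.elim_inr] at hx hy h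
    · exact Subtype.ext (congrArg Sum.inl (Subsingleton.elim a b))
    · subst hx
      split_ifs at hy <;> simp at hy
    · subst hy
      split_ifs at hx <;> simp at hx
    · have hparity : i.val % 2 = j.val % 2 := by
        subst hy
        split_ifs at hx <;> simp at hx <;> omega
      exact Subtype.ext (congrArg Sum.inr (Fin.ext (by omega)))
  simpa using Nat.card_le_card_of_injective half half_injective

theorem kipas_isContained_completeEquipartiteGraph {n : ℕ} (hn : 2 ≤ n) :
    kipas n ⊑ completeEquipartiteGraph 3 (n / 2) :=
  isContained_completeEquipartiteGraph_of_colorable (kipasColoring n) (n / 2) fun k => by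
    rw [← Nat.card_eq_fintype_card]
    exact card_colorClass_kipasColoring_le hn k

theorem stmt_19 {V : Type*} (H : SimpleGraph V) (n : ℕ) (hn : 5 ≤ n)
    (hdeg : ∀ v : V, (n - 1 + 1) / 2 ≤ Nat.card ↥(H.neighborSet v))
    (hcomp : ∀ v : V, Nat.card ↥((H.connectedComponentMk v).supp) ≤ n - 2)
    (hcard : 2 * n - 3 ≤ Nat.card V) :
    3 ≤ Nat.card H.ConnectedComponent ∧
    (∀ v : V, (n + 1 + 1) / 2 ≤ Nat.card ↥((H.connectedComponentMk v).supp)) ∧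
    Contains Hᶜ (kipas n) := by
  have : Finite V := Nat.finite_of_card_ne_zero (by omega)
  have hlarge (v : V) : (n + 1 + 1) / 2 ≤ Nat.card (H.connectedComponentMk v).supp := by
    have := H.card_neighborSet_lt_card_supp v
    have := hdeg v
    omega
  have hthree : 3 ≤ Nat.card H.ConnectedComponent := by
    by_contra! hfew
    have hV := H.card_le_mul_card_connectedComponent fun c => c.ind hcomp
    have : (n - 2) * Nat.card H.ConnectedComponent ≤ (n - 2) * 2 := by gcongr; omega
    omega
  refine ⟨hthree, hlarge, contains_iff_isContained.2 ?_⟩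
  have := Fintype.ofFinite H.ConnectedComponent
  obtain ⟨e⟩ : Nonempty (Fin 3 ↪ H.ConnectedComponent) := by
    rwa [Function.Embedding.nonempty_iff_card_le, Fintype.card_fin, ← Nat.card_eq_fintype_card]
  refine (kipas_isContained_completeEquipartiteGraph (by omega)).trans
    (H.completeEquipartiteGraph_isContained_compl e fun i => ?_)
  induction e i using ConnectedComponent.ind with
  | h v => exact (Nat.div_le_div_right (by omega)).trans (hlarge v)
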